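/- Let η be a substitution over A, k ≥ 0 an integer, b ∈ A, and let (m_i, a_i)_{i=0,…,k} and (m'_i, a'_i)_{i=0,…,k} be two b-admissible sequences such that Σ_{j=0}^{k} |η^j(m_j)| = Σ_{j=0}^{k} |η^j(m'_j)|. Then (m_i, a_i) = (m'_i, a'_i) for every 0 ≤ i ≤ k. -/
import Mathlib


open Filter List

variable {A : Type*}

/-- A substitution applied to a word: concatenation of the images of its letters. -/
def substW (η : A → List A) (w : List A) : List A := (w.map η).flatten

/-- The `k`-th iterate of a substitution applied to a word. -/
def iterW (η : A → List A) (k : ℕ) (w : List A) : List A := (substW η)^[k] w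

/-- `η` is a substitution: nonempty images and at least one growing letter. -/
def IsSubstitution (η : A → List A) : Prop :=
  (∀ c, η c ≠ []) ∧ ∃ a, Tendsto (fun k => (iterW η k [a]).length) atTop atTop

/-- `(m i, a i)` for `i = 0, …, len-1` is an `x`-admissible sequence:
`m (i) ++ [a i]` is a prefix of `η (a (i+1))` and `m (len-1) ++ [a (len-1)]`
is a prefix of `η x`. -/
def AdmSeq (η : A → List A) (len : ℕ) (m : ℕ → List A) (a : ℕ → A) (x : A) : Prop :=
  (∀ i, i + 1 < len → (m i ++ [a i]) <+: η (a (i + 1))) ∧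
  (1 ≤ len → (m (len - 1) ++ [a (len - 1)]) <+: η x)

/-- `Σ_{j<k} |η^j(m_j)|`. -/
def sumLen (η : A → List A) (k : ℕ) (m : ℕ → List A) : ℕ :=
  ∑ j ∈ Finset.range k, (iterW η j (m j)).length

/-- `η^{k-1}(m_{k-1}) η^{k-2}(m_{k-2}) ⋯ η^0(m_0)`. -/
def concatDT (η : A → List A) (k : ℕ) (m : ℕ → List A) : List A :=
  ((List.range k).reverse.map (fun j => iterW η j (m j))).flatten

/-- The digit word `|m_{k-1}| ⊙ |m_{k-2}| ⊙ ⋯ ⊙ |m_0|`. -/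
def dtDigits (k : ℕ) (m : ℕ → List A) : List ℕ :=
  (List.range k).reverse.map (fun j => (m j).length)

/-- Partial run of the automaton `A_{η,x}`: from state `x`, the digit `d`
moves to the `d`-th letter of `η x` when `d < |η x|`. -/
def run (η : A → List A) : List ℕ → A → Option A
  | [], x => some x
  | d :: w, x => if h : d < (η x).length then run η w ((η x)[d]) else none

/-- `u` restricted to nonnegative positions is a periodic point of `η` of period `p`:
every `η^p`-image of a prefix of `u` is again a prefix of `u`. -/
def RightPer (η : A → List A) (p : ℕ) (u : ℤ → A) : Prop :=
  ∀ n : ℕ, ∀ j : ℕ, j < (iterW η p (List.ofFn (fun i : Fin (n+1) => u i))).length →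
    (iterW η p (List.ofFn (fun i : Fin (n+1) => u i)))[j]? = some (u j)

/-- `u` restricted to negative positions is a periodic point of `η` of period `p`:
every `η^p`-image of a suffix `u_{-(n+1)} ⋯ u_{-1}` of the left part is again a
suffix of the left part of `u`. -/
def LeftPer (η : A → List A) (p : ℕ) (u : ℤ → A) : Prop :=
  ∀ n : ℕ, ∀ j : ℕ,
    j < (iterW η p (List.ofFn (fun i : Fin (n+1) => u ((i : ℤ) - (n+1))))).length →
    (iterW η p (List.ofFn (fun i : Fin (n+1) => u ((i : ℤ) - (n+1)))))[j]? =
      some (u ((j : ℤ) -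
        (iterW η p (List.ofFn (fun i : Fin (n+1) => u ((i : ℤ) - (n+1))))).length))

/-- `u : ℤ → A` is a two-sided periodic point of `η` of period `p ≥ 1` with
growing seed `u₋₁ | u₀`. -/
def TwoSidedPerPoint (η : A → List A) (p : ℕ) (u : ℤ → A) : Prop :=
  1 ≤ p ∧ RightPer η p u ∧ LeftPer η p u ∧
  Tendsto (fun k => (iterW η k [u 0]).length) atTop atTop ∧
  Tendsto (fun k => (iterW η k [u (-1)]).length) atTop atTop

/-- The Dumont–Thomas decomposition data of a positive integer `n` with respect to
the letter `x` (Theorem of Dumont–Thomas for the right-infinite part):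
`p ∣ k`, `p ≤ k`, the sequence is `x`-admissible, `m_{k-1} ⋯ m_{k-p} ≠ ε` and
`Σ_{j<k} |η^j(m_j)| = n`. -/
def PosSpec (η : A → List A) (p : ℕ) (x : A) (n : ℤ) (k : ℕ) (m : ℕ → List A)
    (a : ℕ → A) : Prop :=
  p ∣ k ∧ p ≤ k ∧ AdmSeq η k m a x ∧ (∃ i, i < p ∧ m (k - 1 - i) ≠ []) ∧
  (sumLen η k m : ℤ) = n

/-- The Dumont–Thomas decomposition data of an integer `n ≤ -2` with respect to
the letter `b` (Theorem of Dumont–Thomas for the left-infinite part). -/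
def NegSpec (η : A → List A) (p : ℕ) (b : A) (n : ℤ) (k : ℕ) (m : ℕ → List A)
    (a : ℕ → A) : Prop :=
  p ∣ k ∧ p ≤ k ∧ AdmSeq η k m a b ∧
  ((List.range p).map (fun i => iterW η (p - 1 - i) (m (k - 1 - i)))).flatten
      ++ [a (k - p)] ≠ iterW η p [b] ∧
  (sumLen η k m : ℤ) = n + (iterW η k [b]).length

/-- `w` is the Dumont–Thomas complement representation `rep_u(n)` of `n ∈ ℤ`. -/
def RepSpec (η : A → List A) (p : ℕ) (u : ℤ → A) (n : ℤ) (w : List ℕ) : Prop :=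
  (n = 0 ∧ w = [0]) ∨ (n = -1 ∧ w = [1]) ∨
  (1 ≤ n ∧ ∃ k m a, PosSpec η p (u 0) n k m a ∧ w = 0 :: dtDigits k m) ∨
  (n ≤ -2 ∧ ∃ k m a, NegSpec η p (u (-1)) n k m a ∧ w = 1 :: dtDigits k m)

/-- Run of the automaton `A_{η,s}` with initial state `start`: the first digit
`0` (resp. `1`) moves to `u 0` (resp. `u (-1)`). -/
def runSeed (η : A → List A) (u : ℤ → A) : List ℕ → Option A
  | [] => none
  | d :: w => if d = 0 then run η w (u 0) else if d = 1 then run η w (u (-1)) else none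

/-- `|η^{k-p-1}(m_{k-1}) ⋯ η^0(m_p)|`, the `u`-quotient of a positive integer. -/
def uQuotPos (η : A → List A) (p k : ℕ) (m : ℕ → List A) : ℤ :=
  ∑ j ∈ Finset.range (k - p), ((iterW η j (m (j + p))).length : ℤ)

/-- `w = tail_{η,p,x}(n)`: the digit word of the unique `x`-admissible sequence of
length `p` whose length-sum is `n`. -/
def TailSpec (η : A → List A) (p : ℕ) (x : A) (n : ℕ) (w : List ℕ) : Prop :=
  ∃ m a, AdmSeq η p m a x ∧ sumLen η p m = n ∧ w = dtDigits p m

/-- Radix order: shorter words first, ties broken lexicographically. -/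
def radLt (v w : List ℕ) : Prop :=
  v.length < w.length ∨ (v.length = w.length ∧ List.Lex (· < ·) v w)

/-- Reversed-radix order: longer words first, ties broken lexicographically. -/
def revLt (v w : List ℕ) : Prop :=
  w.length < v.length ∨ (v.length = w.length ∧ List.Lex (· < ·) v w)

/-- The total order `≺` on `{0,1}D*`. -/
def precLt (v w : List ℕ) : Prop :=
  (v.head? = some 1 ∧ w.head? = some 0) ∨
  (v.head? = some 0 ∧ w.head? = some 0 ∧ radLt v w) ∨
  (v.head? = some 1 ∧ w.head? = some 1 ∧ revLt v w)

/-- The base-2 value `Σ_{i<k} w_i 2^i` of the word `w = w_{k-1} ⋯ w_0`. -/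
def natVal2 (w : List ℕ) : ℕ := w.foldl (fun acc d => 2 * acc + d) 0

/-- The two's complement value `Σ_{i<k} w_i 2^i − w_{k-1} 2^k`. -/
def val2c (w : List ℕ) : ℤ := (natVal2 w : ℤ) - (w.headI : ℤ) * 2 ^ w.length

/-- Fibonacci numbers with `F 0 = 1`, `F 1 = 2`. -/
def fib2 : ℕ → ℕ
  | 0 => 1
  | 1 => 2
  | n + 2 => fib2 (n + 1) + fib2 n

/-- The Fibonacci complement value `Σ_{i<k} w_i F_i − w_{k-1} F_k`
of the word `w = w_{k-1} ⋯ w_0`. -/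
def valFc (w : List ℕ) : ℤ :=
  (∑ i ∈ Finset.range w.length, (w.reverse.getD i 0 : ℤ) * fib2 i) -
    (w.headI : ℤ) * fib2 w.length

lemma substW_append' (η : A → List A) (x y : List A) :
    substW η (x ++ y) = substW η x ++ substW η y := by simp [substW]

lemma iterW_append' (η : A → List A) (i : ℕ) (x y : List A) :
    iterW η i (x ++ y) = iterW η i x ++ iterW η i y := by
  induction i generalizing x y with
  | zero => simp [iterW]
  | succ n ih =>
    simp only [iterW, Function.iterate_succ_apply, substW_append'] at *
    exact ih _ _

lemma iterW_singleton_succ' (η : A → List A) (i : ℕ) (c : A) :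
    iterW η (i + 1) [c] = iterW η i (η c) := by
  simp [iterW, Function.iterate_succ_apply, substW]

lemma sum_lt_aux (η : A → List A) (m : ℕ → List A) (a : ℕ → A) (i : ℕ)
    (hadm : ∀ j, j + 1 ≤ i → (m j ++ [a j]) <+: η (a (j + 1))) :
    ∑ j ∈ Finset.range i, (iterW η j (m j)).length < (iterW η i [a i]).length := by
  induction i with
  | zero => simp [iterW]
  | succ n ih =>
    obtain ⟨t, ht⟩ := hadm n le_rfl
    have hpre : iterW η n (m n ++ [a n]) <+: iterW η n (η (a (n + 1))) :=
      ⟨iterW η n t, by rw [← iterW_append', ht]⟩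
    have hlen := hpre.length_le
    rw [iterW_append', List.length_append] at hlen
    have hih := ih (fun j hj => hadm j (by omega))
    rw [Finset.sum_range_succ, iterW_singleton_succ']
    omega

lemma top_eq_aux (η : A → List A) (K : ℕ) (m0 m0' : List A) (c c' : A) (w : List A)
    (h : (m0 ++ [c]) <+: w) (h' : (m0' ++ [c']) <+: w) (s s' : ℕ)
    (hs : s < (iterW η K [c]).length) (hs' : s' < (iterW η K [c']).length)
    (hsum : (iterW η K m0).length + s = (iterW η K m0').length + s') :
    m0 = m0' ∧ c = c' ∧ s = s' := by
  have key : ∀ (m1 m1' : List A) (c1 c1' : A) (s1 s1' : ℕ),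
      (m1 ++ [c1]) <+: w → (m1' ++ [c1']) <+: w →
      s1 < (iterW η K [c1]).length →
      (iterW η K m1).length + s1 = (iterW η K m1').length + s1' →
      ¬ m1.length < m1'.length := by
    intro m1 m1' c1 c1' s1 s1' hp hp' hs1 heq hlt
    have hm1'w : m1' <+: w := ((m1'.prefix_append [c1']).trans hp')
    have hpp : (m1 ++ [c1]) <+: m1' :=
      List.prefix_of_prefix_length_le hp hm1'w (by simp; omega)
    obtain ⟨t, ht⟩ := hpp
    have : (iterW η K m1').length =
        (iterW η K m1).length + (iterW η K [c1]).length + (iterW η K t).length := by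
      rw [← ht, iterW_append', iterW_append']
      simp [List.length_append]
      ring
    omega
  have hlen : m0.length = m0'.length := by
    rcases Nat.lt_trichotomy m0.length m0'.length with h1 | h1 | h1
    · exact absurd h1 (key m0 m0' c c' s s' h h' hs hsum)
    · exact h1
    · exact absurd h1 (key m0' m0 c' c s' s h' h hs' hsum.symm)
  have heqw : (m0 ++ [c]) = (m0' ++ [c']) := by
    have := List.prefix_of_prefix_length_le h h' (by simp [hlen])
    exact this.eq_of_length (by simp [hlen])
  have hm : m0 = m0' := (List.append_inj heqw hlen).1
  have hc : c = c' := by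
    have := (List.append_inj heqw hlen).2
    simpa using this
  refine ⟨hm, hc, ?_⟩
  rw [hm] at hsum
  omega

/-- Dumont–Thomas, Lemma 1.3. Two `b`-admissible sequences
`(m_i,a_i)_{i=0,…,k}` and `(m'_i,a'_i)_{i=0,…,k}` with the same length-sum
`Σ_{j=0}^{k} |η^j(m_j)|` coincide. -/
theorem admissible_unique [Finite A] (η : A → List A) (hη : IsSubstitution η)
    (k : ℕ) (b : A) (m m' : ℕ → List A) (a a' : ℕ → A)
    (h : AdmSeq η (k + 1) m a b) (h' : AdmSeq η (k + 1) m' a' b)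
    (hsum : ∑ j ∈ Finset.range (k + 1), (iterW η j (m j)).length =
      ∑ j ∈ Finset.range (k + 1), (iterW η j (m' j)).length) :
    ∀ i ≤ k, m i = m' i ∧ a i = a' i := by
  clear hη
  induction k generalizing b m m' a a' with
  | zero =>
    intro i hi
    interval_cases i
    have h0 : (m 0 ++ [a 0]) <+: η b := h.2 le_rfl
    have h0' : (m' 0 ++ [a' 0]) <+: η b := h'.2 le_rfl
    obtain ⟨e1, e2, -⟩ := top_eq_aux η 0 (m 0) (m' 0) (a 0) (a' 0) (η b) h0 h0' 0 0
      (by simp [iterW]) (by simp [iterW]) (by simpa [iterW] using hsum)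
    exact ⟨e1, e2⟩
  | succ n ih =>
    have htop : (m (n + 1) ++ [a (n + 1)]) <+: η b := by simpa using h.2 (by omega)
    have htop' : (m' (n + 1) ++ [a' (n + 1)]) <+: η b := by simpa using h'.2 (by omega)
    have hs := sum_lt_aux η m a (n + 1) (fun j hj => h.1 j (by omega))
    have hs' := sum_lt_aux η m' a' (n + 1) (fun j hj => h'.1 j (by omega))
    rw [Finset.sum_range_succ (fun j => (iterW η j (m j)).length),
      Finset.sum_range_succ (fun j => (iterW η j (m' j)).length)] at hsum
    obtain ⟨e1, e2, e3⟩ := top_eq_aux η (n + 1) (m (n + 1)) (m' (n + 1)) (a (n + 1))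
      (a' (n + 1)) (η b) htop htop' _ _ hs hs' (by omega)
    have hA : AdmSeq η (n + 1) m a (a (n + 1)) :=
      ⟨fun i hi => h.1 i (by omega), fun _ => by simpa using h.1 n (by omega)⟩
    have hA' : AdmSeq η (n + 1) m' a' (a (n + 1)) :=
      ⟨fun i hi => h'.1 i (by omega), fun _ => by
        rw [e2]; simpa using h'.1 n (by omega)⟩
    intro i hi
    rcases Nat.lt_or_ge i (n + 1) with hlt | hge
    · exact ih (a (n + 1)) m m' a a' hA hA' e3 i (by omega)
    · have : i = n + 1 := by omega
      subst this
      exact ⟨e1, e2⟩
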